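/- If L ⊆ binom(X,2) is an edge-weight lasso for an X-tree T, then L is strongly non-bipartite, i.e. no connected component of the graph Γ(L) = (X, L) is bipartite. -/

import Mathlib

/- Common definitions for formalizing results of Dress, Huber & Steel,
   "Lassoing a phylogenetic tree I: Basic properties, shellings, and covers".

   Trees are modelled as simple graphs on an ambient vertex type `U`;
   the vertex set of the tree is the support of the graph (every vertex of a
   tree with at least two vertices has degree >= 1). -/

noncomputable section
open scoped Classical

namespace Lasso

variable {U : Type}

/-- The degree of a vertex. -/
def deg (G : SimpleGraph U) (v : U) : ℕ := (G.neighborSet v).ncard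

/-- A leaf is a vertex of degree `1`. -/
def IsLeaf (G : SimpleGraph U) (v : U) : Prop := deg G v = 1

/-- An interior vertex: a non-leaf vertex of the tree. -/
def Interior (G : SimpleGraph U) (v : U) : Prop := v ∈ G.support ∧ ¬ IsLeaf G v

/-- `G` is an `X`-tree: a finite tree without vertices of degree two whose
    leaf set is exactly `X`. -/
structure IsXTree (X : Set U) (G : SimpleGraph U) : Prop where
  support_finite : G.support.Finite
  support_nonempty : G.support.Nonempty
  connected : ∀ a ∈ G.support, ∀ b ∈ G.support, G.Reachable a b
  acyclic : G.IsAcyclic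
  no_deg_two : ∀ v : U, deg G v ≠ 2
  leaves_eq : X = {v : U | IsLeaf G v}

/-- An edge weighting of `G`: nonnegative, and zero away from the edges of `G`
    (so that it represents an element of `ℝ_{≥0}^E`). -/
structure IsWeighting (G : SimpleGraph U) (ω : Sym2 U → ℝ) : Prop where
  nonneg : ∀ e, 0 ≤ ω e
  zero_off : ∀ e, e ∉ G.edgeSet → ω e = 0

/-- A proper edge weighting: in addition strictly positive on interior edges
    (edges both of whose endpoints are non-leaves). -/
structure IsProperWeighting (G : SimpleGraph U) (ω : Sym2 U → ℝ)
    extends IsWeighting G ω : Prop where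
  interior_pos : ∀ e ∈ G.edgeSet, (∀ u ∈ e, ¬ IsLeaf G u) → 0 < ω e

/-- The set `E_T(x|y)` of edges separating `x` from `y`, i.e. the edges lying
    on every walk from `x` to `y` (in a tree: the edges of the path). -/
def pathEdges (G : SimpleGraph U) (x y : U) : Set (Sym2 U) :=
  {e | e ∈ G.edgeSet ∧ ∀ p : G.Walk x y, e ∈ p.edges}

/-- The induced distance `D_ω(x,y)`. -/
def tdist (G : SimpleGraph U) (ω : Sym2 U → ℝ) (x y : U) : ℝ :=
  ∑ᶠ e ∈ pathEdges G x y, ω e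

/-- Path edge set of an unordered pair. -/
def pairPathEdges (G : SimpleGraph U) (c : Sym2 U) : Set (Sym2 U) :=
  {e | e ∈ G.edgeSet ∧ ∀ x y : U, c = s(x, y) → ∀ p : G.Walk x y, e ∈ p.edges}

/-- `D_ω` on an unordered pair (a cord); `λ^T_c(ω)`. -/
def pdist (G : SimpleGraph U) (ω : Sym2 U → ℝ) (c : Sym2 U) : ℝ :=
  ∑ᶠ e ∈ pairPathEdges G c, ω e

/-- `(G,ω)` and `(G',ω')` are `L`-isometric. -/
def LIso (L : Set (Sym2 U)) (G : SimpleGraph U) (ω : Sym2 U → ℝ)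
    (G' : SimpleGraph U) (ω' : Sym2 U → ℝ) : Prop :=
  ∀ x y : U, s(x, y) ∈ L → tdist G ω x y = tdist G' ω' x y

/-- `L` is a set of cords of `X`: 2-element subsets of `X`. -/
def IsCordSet (X : Set U) (L : Set (Sym2 U)) : Prop :=
  ∀ c ∈ L, ¬ c.IsDiag ∧ ∀ u ∈ c, u ∈ X

/-- The union of all cords in `L`. -/
def cup (L : Set (Sym2 U)) : Set U := {v | ∃ c ∈ L, v ∈ c}

/-- `L` is an edge-weight lasso for `G`. -/
def EdgeWeightLasso (G : SimpleGraph U) (L : Set (Sym2 U)) : Prop :=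
  ∀ ω ω' : Sym2 U → ℝ, IsProperWeighting G ω → IsProperWeighting G ω' →
    LIso L G ω G ω' → ω = ω'

/-- `G ≃ G'` via a graph isomorphism fixing `X` pointwise. -/
def FixingIso (X : Set U) (G G' : SimpleGraph U) : Prop :=
  ∃ φ : G ≃g G', ∀ x ∈ X, φ x = x

/-- `(G,ω)` and `(G',ω')` are isometric: a graph isomorphism fixing `X`
    pointwise and preserving edge weights. -/
def FixingIsometry (X : Set U) (G G' : SimpleGraph U) (ω ω' : Sym2 U → ℝ) : Prop :=
  ∃ φ : G ≃g G', (∀ x ∈ X, φ x = x) ∧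
    ∀ e ∈ G.edgeSet, ω' (Sym2.map (fun u => φ u) e) = ω e

/-- `L` is a topological lasso for the `X`-tree `G`. -/
def TopologicalLasso (X : Set U) (G : SimpleGraph U) (L : Set (Sym2 U)) : Prop :=
  ∀ G' : SimpleGraph U, IsXTree X G' →
    ∀ ω ω' : Sym2 U → ℝ, IsProperWeighting G ω → IsProperWeighting G' ω' →
      LIso L G ω G' ω' → FixingIso X G G'

/-- `L` is a strong lasso for the `X`-tree `G`. -/
def StrongLasso (X : Set U) (G : SimpleGraph U) (L : Set (Sym2 U)) : Prop :=
  ∀ G' : SimpleGraph U, IsXTree X G' →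
    ∀ ω ω' : Sym2 U → ℝ, IsProperWeighting G ω → IsProperWeighting G' ω' →
      LIso L G ω G' ω' → FixingIsometry X G G' ω ω'

/-- `G` displays the quartet `a a' ‖ b b'`: some edge lies on all four paths
    joining `a` or `a'` to `b` or `b'`. -/
def DisplaysQ (G : SimpleGraph U) (a a' b b' : U) : Prop :=
  ∃ e : Sym2 U, e ∈ pathEdges G a b ∧ e ∈ pathEdges G a b' ∧
    e ∈ pathEdges G a' b ∧ e ∈ pathEdges G a' b'

def Distinct4 (a b c d : U) : Prop :=
  a ≠ b ∧ a ≠ c ∧ a ≠ d ∧ b ≠ c ∧ b ≠ d ∧ c ≠ d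

/-- `a a' ‖ b b' ∈ Q(G)`: a quartet on four distinct elements of `X`
    displayed by `G`. -/
def QuartetOf (X : Set U) (G : SimpleGraph U) (a a' b b' : U) : Prop :=
  a ∈ X ∧ a' ∈ X ∧ b ∈ X ∧ b' ∈ X ∧ Distinct4 a a' b b' ∧ DisplaysQ G a a' b b'

/-- `G` displays `a a' | b b'`: it displays neither `a b ‖ a' b'` nor
    `a b' ‖ a' b`. -/
def DisplaysBar (G : SimpleGraph U) (a a' b b' : U) : Prop :=
  ¬ DisplaysQ G a b a' b' ∧ ¬ DisplaysQ G a b' a' b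

/-- `A, B` is a virtual `T`-split of `X`. -/
def VirtualSplit (X : Set U) (G : SimpleGraph U) (A B : Set U) : Prop :=
  A.Nonempty ∧ B.Nonempty ∧ Disjoint A B ∧ A ∪ B = X ∧
    ∀ a ∈ A, ∀ a' ∈ A, ∀ b ∈ B, ∀ b' ∈ B, a ≠ a' → b ≠ b' → DisplaysBar G a a' b b'

/-- `G ≤ G'` (`G'` refines `G`), via the standard characterization
    `Q(T) ⊆ Q(T')` of refinement of `X`-trees. -/
def Refines (X : Set U) (G G' : SimpleGraph U) : Prop :=
  ∀ a a' b b' : U, QuartetOf X G a a' b b' → QuartetOf X G' a a' b b'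

/-- `L` is a weak lasso for (coralls) the `X`-tree `G`. -/
def WeakLasso (X : Set U) (G : SimpleGraph U) (L : Set (Sym2 U)) : Prop :=
  ∀ G' : SimpleGraph U, IsXTree X G' →
    ∀ ω ω' : Sym2 U → ℝ, IsProperWeighting G ω → IsProperWeighting G' ω' →
      LIso L G ω G' ω' → Refines X G G'

/-- The subgraph induced on a vertex set `A`. -/
def restrict {α : Type*} (Γ : SimpleGraph α) (A : Set α) : SimpleGraph α where
  Adj u v := Γ.Adj u v ∧ u ∈ A ∧ v ∈ A
  symm := by constructor; rintro u v ⟨h, hu, hv⟩; exact ⟨h.symm, hv, hu⟩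
  loopless := by constructor; rintro v ⟨h, _, _⟩; exact Γ.irrefl h

/-- The restriction of `Γ` to `A` is a connected graph. -/
def ConnectedOn {α : Type*} (Γ : SimpleGraph α) (A : Set α) : Prop :=
  ∀ x ∈ A, ∀ y ∈ A, (restrict Γ A).Reachable x y

/-- The connected component of `x` in `Γ` is bipartite. -/
def ComponentBipartite {α : Type*} (Γ : SimpleGraph α) (x : α) : Prop :=
  ∃ f : α → Bool, ∀ u v : α, Γ.Reachable x u → Γ.Adj u v → f u ≠ f v

/-- No connected component (of the graph with vertex set `S`) is bipartite. -/
def StronglyNonBipartite {α : Type*} (Γ : SimpleGraph α) (S : Set α) : Prop :=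
  ∀ x ∈ S, ¬ ComponentBipartite Γ x

/-- The graph `Γ` is bipartite. -/
def Bipartite {α : Type*} (Γ : SimpleGraph α) : Prop :=
  ∃ f : α → Bool, ∀ u v : α, Γ.Adj u v → f u ≠ f v

/-- `E_v`: the set of edges of `G` containing `v`. -/
def Ev (G : SimpleGraph U) (v : U) : Set (Sym2 U) := {e | e ∈ G.edgeSet ∧ v ∈ e}

/-- The graph `G(L,v)` on the edge set `E_v`: two distinct edges at `v` are
    adjacent if some cord of `L` has both on its path. -/
def covGraph (G : SimpleGraph U) (L : Set (Sym2 U)) (v : U) : SimpleGraph (Sym2 U) where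
  Adj e e' := e ≠ e' ∧ e ∈ Ev G v ∧ e' ∈ Ev G v ∧
    ∃ x y : U, s(x, y) ∈ L ∧ e ∈ pathEdges G x y ∧ e' ∈ pathEdges G x y
  symm := by
    constructor
    rintro e e' ⟨hne, he, he', x, y, hc, hp, hp'⟩
    exact ⟨hne.symm, he', he, x, y, hc, hp', hp⟩
  loopless := by constructor; rintro e ⟨hne, _⟩; exact hne rfl

/-- `G(L,v)` is the complete graph on `E_v`. -/
def CompleteAt (G : SimpleGraph U) (L : Set (Sym2 U)) (v : U) : Prop :=
  ∀ e ∈ Ev G v, ∀ e' ∈ Ev G v, e ≠ e' → (covGraph G L v).Adj e e'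

/-- `L` is a `t`-cover of `G`. -/
def TCover (X : Set U) (G : SimpleGraph U) (L : Set (Sym2 U)) : Prop :=
  cup L = X ∧ ∀ v : U, Interior G v → CompleteAt G L v

/-- The graph `Γ(L, c)` for the cord `c = x x'`, with vertex set `X − {x,x'}`
    and edge set `L^(c)`. -/
def cordGraphC (X : Set U) (G : SimpleGraph U) (L : Set (Sym2 U)) (x x' : U) :
    SimpleGraph U where
  Adj y y' := y ≠ y' ∧ y ≠ x ∧ y ≠ x' ∧ y' ≠ x ∧ y' ≠ x' ∧
    s(y, y') ∈ L ∧ QuartetOf X G x x' y y' ∧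
    ((s(x, y) ∈ L ∧ s(x', y') ∈ L) ∨ (s(x, y') ∈ L ∧ s(x', y) ∈ L))
  symm := by
    constructor
    rintro y y' ⟨hne, h1, h2, h3, h4, hL,
      ⟨hx1, hx2, hy1, hy2, ⟨d1, d2, d3, d4, d5, d6⟩, e, p1, p2, p3, p4⟩, hor⟩
    exact ⟨hne.symm, h3, h4, h1, h2, by rwa [Sym2.eq_swap],
      ⟨hx1, hx2, hy2, hy1, ⟨d1, d3, d2, d5, d4, d6.symm⟩, e, p2, p1, p4, p3⟩, hor.symm⟩
  loopless := by constructor; rintro y ⟨hne, _⟩; exact hne rfl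

/-- `v` lies on the path of `G` from `x` to `y`. -/
def OnPath (G : SimpleGraph U) (x y v : U) : Prop :=
  v = x ∨ v = y ∨ ∃ e ∈ pathEdges G x y, v ∈ e

/-- `v = med_G(a,b,c)`: `v` lies on all three pairwise paths. -/
def IsMedian (G : SimpleGraph U) (a b c v : U) : Prop :=
  OnPath G a b v ∧ OnPath G a c v ∧ OnPath G b c v

/-- `L` is a triplet cover of `G`. -/
def TripletCover (X : Set U) (G : SimpleGraph U) (L : Set (Sym2 U)) : Prop :=
  ∀ v : U, Interior G v → ∃ a b c : U, a ∈ X ∧ b ∈ X ∧ c ∈ X ∧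
    a ≠ b ∧ a ≠ c ∧ b ≠ c ∧
    s(a, b) ∈ L ∧ s(a, c) ∈ L ∧ s(b, c) ∈ L ∧ IsMedian G a b c v

/-- `L` is a pointed `x`-cover of `G`. -/
def PointedCover (X : Set U) (G : SimpleGraph U) (L : Set (Sym2 U)) (x : U) : Prop :=
  cup L = X ∧ (∀ v : U, Interior G v → CompleteAt G L v) ∧
    ∀ v : U, Interior G v → ∃ a b : U, a ≠ b ∧
      s(a, x) ∈ L ∧ s(b, x) ∈ L ∧ IsMedian G a b x v

/-- Every interior vertex has degree `3`. -/
def IsBinary (G : SimpleGraph U) : Prop := ∀ v : U, Interior G v → deg G v = 3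

/-- `a, b` form a `T`-cherry with common neighbour `v`. -/
def IsCherry (G : SimpleGraph U) (a b v : U) : Prop :=
  a ≠ b ∧ IsLeaf G a ∧ IsLeaf G b ∧ G.Adj a v ∧ G.Adj b v

/-- `a, b` form a proper `T`-cherry with common neighbour `v` of degree `3`. -/
def IsProperCherry (G : SimpleGraph U) (a b v : U) : Prop :=
  IsCherry G a b v ∧ deg G v = 3

/-- `W` is a `T`-core of `G`. -/
def IsCore (G : SimpleGraph U) (W : Set U) : Prop :=
  W.Nonempty ∧ W ⊆ G.support ∧
    (∀ a ∈ W, ∀ b ∈ W, (restrict G W).Reachable a b) ∧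
    ∀ v ∈ W, deg (restrict G W) v = 1 ∨ deg (restrict G W) v = deg G v

/-- `X_W`: the leaf set of the induced tree `T_W`. -/
def coreLeaves (G : SimpleGraph U) (W : Set U) : Set U :=
  {v | v ∈ W ∧ deg (restrict G W) v = 1}

/-- `g` is the gate of `x` in `W`: the vertex of `W` closest to `x`. -/
def IsGate (G : SimpleGraph U) (W : Set U) (x g : U) : Prop :=
  g ∈ W ∧ ∀ w ∈ W, OnPath G x w g

/-- `L_W`: the cords induced on the gates. -/
def gateCords (G : SimpleGraph U) (W : Set U) (L : Set (Sym2 U)) : Set (Sym2 U) :=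
  {c | ∃ p q y y' : U, s(p, q) ∈ L ∧ IsGate G W p y ∧ IsGate G W q y' ∧
       y ≠ y' ∧ c = s(y, y')}

/-- The gate map of the cherry reduction: `a, b ↦ v`, all else fixed. -/
def cherryMap (a b v : U) : U → U := fun p => if p = a ∨ p = b then v else p

/-- `L_U` for the cherry reduction at the proper cherry `a,b` with neighbour `v`. -/
def cherryLU (L : Set (Sym2 U)) (a b v : U) : Set (Sym2 U) :=
  {c | ∃ p q : U, s(p, q) ∈ L ∧ cherryMap a b v p ≠ cherryMap a b v q ∧
       c = s(cherryMap a b v p, cherryMap a b v q)}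

/-- `X(a, L^{ab}) = {y : ay ∈ L − {ab}}`. -/
def sideSet (L : Set (Sym2 U)) (a b : U) : Set U :=
  {y | s(a, y) ∈ L ∧ s(a, y) ≠ s(a, b)}

/-- `Σ_{c ∈ LU} ρ(c)·λ^{TU}_c = 0` as a linear form on `ℝ^{E_U}`. -/
def RhoAnnihilates (TU : SimpleGraph U) (LU : Set (Sym2 U)) (ρ : Sym2 U → ℝ) : Prop :=
  ∀ η : Sym2 U → ℝ, (∀ e, e ∉ TU.edgeSet → η e = 0) →
    ∑ᶠ c ∈ LU, ρ c * pdist TU η c = 0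

/-- `D_ω(ab|cd)`. -/
def Dq (G : SimpleGraph U) (ω : Sym2 U → ℝ) (a b c d : U) : ℝ :=
  max (tdist G ω a c + tdist G ω b d) (tdist G ω a d + tdist G ω b c)
    - tdist G ω a b - tdist G ω c d

/-- The star tree on `X` with central vertex `z`. -/
def starGraph (X : Set U) (z : U) : SimpleGraph U :=
  SimpleGraph.fromEdgeSet {c | ∃ x ∈ X, c = s(x, z)}

/-- `A ∨ B`: all cords with one end in `A` and the other in `B`. -/
def vee (A B : Set U) : Set (Sym2 U) := {c | ∃ a ∈ A, ∃ b ∈ B, c = s(a, b)}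

/-- A `T`-shelling of `binom(X,2) − L` with cords `aᵢbᵢ` and pivots `pᵢ, qᵢ`. -/
def IsShelling (X : Set U) (G : SimpleGraph U) (L : Set (Sym2 U)) (m : ℕ)
    (a b p q : Fin m → U) : Prop :=
  (∀ i, a i ∈ X ∧ b i ∈ X ∧ a i ≠ b i ∧ s(a i, b i) ∉ L) ∧
  Function.Injective (fun i => s(a i, b i)) ∧
  (∀ x y : U, x ∈ X → y ∈ X → x ≠ y → s(x, y) ∉ L → ∃ i, s(x, y) = s(a i, b i)) ∧
  ∀ i : Fin m,
    p i ∈ X ∧ q i ∈ X ∧ p i ≠ q i ∧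
    p i ≠ a i ∧ p i ≠ b i ∧ q i ≠ a i ∧ q i ≠ b i ∧
    DisplaysQ G (a i) (p i) (b i) (q i) ∧
    ∀ u w : U, u ∈ ({a i, b i, p i, q i} : Set U) → w ∈ ({a i, b i, p i, q i} : Set U) →
      u ≠ w → s(u, w) ≠ s(a i, b i) →
      (s(u, w) ∈ L ∨ ∃ j : Fin m, j < i ∧ s(u, w) = s(a j, b j))

/-- `L` is an `s`-lasso for `G`. -/
def SLasso (X : Set U) (G : SimpleGraph U) (L : Set (Sym2 U)) : Prop :=
  cup L = X ∧ ∃ (m : ℕ) (a b p q : Fin m → U), IsShelling X G L m a b p q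

/-- `L'_{A,B}` of Corollary 3 (the cherry construction). -/
def LAB (L' : Set (Sym2 U)) (X : Set U) (a b : U) (A B : Set U) : Set (Sym2 U) :=
  {c | c ∈ L' ∧ ∀ u ∈ c, u ∈ X ∧ u ≠ a ∧ u ≠ b} ∪
  {c | ∃ x ∈ A ∪ {b}, c = s(a, x)} ∪
  {c | ∃ x ∈ B, c = s(b, x)}

end Lasso
namespace Lasso

/-! If the component of a leaf `x` in `Γ(L)` were bipartite, a `±1` colouring of it (extended by
`0`) gives `g` with `g a + g b = 0` for every cord `ab ∈ L`. Adding `g y` to the weight of the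
pendant edge at each leaf `y` changes `D(a, b)` by `g a + g b`, so the new weighting is
`L`-isometric to the old one, yet it differs on the pendant edge at `x`. Since `|X| ≥ 3`, no edge
joins two leaves, so that pendant edge is shifted by `g x` alone. -/

open SimpleGraph

section Development

variable {U : Type}

section Leaves

variable {G : SimpleGraph U} {a b v w w' : U}

lemma IsLeaf.exists_adj (hv : IsLeaf G v) : ∃ w, G.Adj v w := by
  obtain ⟨w, hw⟩ := Set.ncard_eq_one.mp hv
  exact ⟨w, show w ∈ G.neighborSet v by simp [hw]⟩

lemma IsLeaf.mem_support (hv : IsLeaf G v) : v ∈ G.support :=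
  G.mem_support.mpr hv.exists_adj

lemma IsLeaf.eq_of_adj (hv : IsLeaf G v) (hw : G.Adj v w) (hw' : G.Adj v w') : w = w' := by
  obtain ⟨z, hz⟩ := Set.ncard_eq_one.mp hv
  have hw : w ∈ G.neighborSet v := hw
  have hw' : w' ∈ G.neighborSet v := hw'
  rw [hz] at hw hw'
  exact hw.trans hw'.symm

lemma _root_.SimpleGraph.Walk.IsPath.not_isLeaf {p : G.Walk a b} (hp : p.IsPath)
    (hv : v ∈ p.support) (hva : v ≠ a) (hvb : v ≠ b) : ¬ IsLeaf G v := by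
  intro hleaf
  set q₁ := p.takeUntil v hv
  set q₂ := p.dropUntil v hv
  have hq₁ : ¬ q₁.Nil := Walk.not_nil_of_ne hva.symm
  have hq₂ : ¬ q₂.Nil := Walk.not_nil_of_ne hvb
  have heq : q₁.penultimate = q₂.snd :=
    hleaf.eq_of_adj (Walk.adj_penultimate hq₁).symm (Walk.adj_snd hq₂)
  have hnd : (q₁.support ++ q₂.support.tail).Nodup := by
    rw [← Walk.support_append, p.take_spec hv]
    exact hp.support_nodup
  exact List.disjoint_of_nodup_append hnd (q₁.getVert_mem_support _)
    (heq ▸ Walk.snd_mem_tail_support hq₂)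

end Leaves

namespace IsXTree

variable {X : Set U} {G : SimpleGraph U} {x w : U}

lemma mem_iff_isLeaf (hT : IsXTree X G) : x ∈ X ↔ IsLeaf G x := by
  rw [hT.leaves_eq]; rfl

lemma subset_support (hT : IsXTree X G) : X ⊆ G.support := fun _ hx =>
  (hT.mem_iff_isLeaf.mp hx).mem_support

lemma exists_isPath (hT : IsXTree X G) {a b : U} (ha : a ∈ X) (hb : b ∈ X) :
    ∃ p : G.Walk a b, p.IsPath :=
  (hT.connected a (hT.subset_support ha) b (hT.subset_support hb)).exists_isPath

/-- Only the one-edge tree has two adjacent leaves. -/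
lemma notMem_of_adj (hX3 : 3 ≤ X.ncard) (hT : IsXTree X G) (hx : x ∈ X) (hxw : G.Adj x w) :
    w ∉ X := by
  intro hw
  have hxleaf : IsLeaf G x := hT.mem_iff_isLeaf.mp hx
  suffices X ⊆ {x, w} by
    have := Set.ncard_le_ncard this (Set.toFinite _)
    have := Set.ncard_insert_le x {w}
    simp only [Set.ncard_singleton] at *
    omega
  intro y hy
  by_contra hyxw
  simp only [Set.mem_insert_iff, Set.mem_singleton_iff, not_or] at hyxw
  obtain ⟨p, hp⟩ := hT.exists_isPath hx hy
  have hnil : ¬ p.Nil := Walk.not_nil_of_ne (Ne.symm hyxw.1)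
  have hsnd : p.snd = w := hxleaf.eq_of_adj (Walk.adj_snd hnil) hxw
  have hwp : w ∈ p.support := hsnd ▸ p.getVert_mem_support 1
  exact hp.not_isLeaf hwp (G.ne_of_adj hxw).symm (Ne.symm hyxw.2) (hT.mem_iff_isLeaf.mp hw)

end IsXTree

section PathSums

variable {G : SimpleGraph U} {a b : U}

lemma pathEdges_eq_edges (hG : G.IsAcyclic) {p : G.Walk a b} (hp : p.IsPath) :
    pathEdges G a b = {e | e ∈ p.edges} := by
  ext e
  refine ⟨fun he => he.2 p, fun he => ⟨p.edges_subset_edgeSet he, fun q => ?_⟩⟩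
  have : p = q.bypass := congrArg Subtype.val
    ((hG.subsingleton_path a b).elim ⟨p, hp⟩ ⟨q.bypass, q.bypass_isPath⟩)
  exact q.edges_bypass_subset_edges (this ▸ he)

lemma tdist_eq_sum_edges (hG : G.IsAcyclic) {p : G.Walk a b} (hp : p.IsPath)
    (ω : Sym2 U → ℝ) : tdist G ω a b = (p.edges.map ω).sum := by
  rw [tdist, pathEdges_eq_edges hG hp, ← List.coe_toFinset, finsum_mem_coe_finset,
    List.sum_toFinset ω hp.edges_nodup]

def endpointSum (g : U → ℝ) : Sym2 U → ℝ :=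
  Sym2.lift ⟨fun u v => g u + g v, fun _ _ => add_comm _ _⟩

@[simp]
lemma endpointSum_mk (g : U → ℝ) (u v : U) : endpointSum g s(u, v) = g u + g v := rfl

lemma sum_endpointSum_edges (g : U → ℝ) (p : G.Walk a b) :
    (p.edges.map (endpointSum g)).sum = 2 * (p.support.map g).sum - g a - g b := by
  induction p with
  | nil =>
    simp only [Walk.edges_nil, Walk.support_nil, List.map_nil, List.map_cons, List.sum_nil,
      List.sum_cons]
    ring
  | cons _ q ih =>
    simp only [Walk.edges_cons, Walk.support_cons, List.map_cons, List.sum_cons, endpointSum_mk, ih]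
    ring

lemma _root_.SimpleGraph.Walk.IsPath.sum_endpointSum_edges {g : U → ℝ} {p : G.Walk a b}
    (hp : p.IsPath) (hab : a ≠ b) (hg : ∀ v ∈ p.support, v ≠ a → v ≠ b → g v = 0) :
    (p.edges.map (endpointSum g)).sum = g a + g b := by
  have hsupp : (p.support.map g).sum = g a + g b := by
    rw [← List.sum_toFinset g hp.support_nodup]
    exact Finset.sum_eq_add_of_mem a b (by simp) (by simp) hab
      fun v hv hvab => hg v (List.mem_toFinset.mp hv) hvab.1 hvab.2
  rw [Lasso.sum_endpointSum_edges, hsupp]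
  ring

end PathSums

lemma isProperWeighting_indicator {G : SimpleGraph U} {ω : Sym2 U → ℝ}
    (hω : ∀ e ∈ G.edgeSet, 0 < ω e) : IsProperWeighting G (G.edgeSet.indicator ω) where
  nonneg e := Set.indicator_nonneg (fun e he => (hω e he).le) e
  zero_off _ he := Set.indicator_of_notMem he ω
  interior_pos e he _ := by rw [Set.indicator_of_mem he]; exact hω e he

namespace IsXTree

variable {X : Set U} {G : SimpleGraph U}

/-- Shifting the weight of every pendant edge `xu` by `g x` shifts `D(a, b)` by `g a + g b`. -/
lemma tdist_add_endpointSum (hT : IsXTree X G) {a b : U} (ha : a ∈ X) (hb : b ∈ X)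
    (hab : a ≠ b) (ω : Sym2 U → ℝ) (g : U → ℝ) :
    tdist G (ω + G.edgeSet.indicator (endpointSum (X.indicator g))) a b
      = tdist G ω a b + g a + g b := by
  obtain ⟨p, hp⟩ := hT.exists_isPath ha hb
  have hpath : (p.edges.map (G.edgeSet.indicator (endpointSum (X.indicator g)))).sum
      = g a + g b := by
    rw [List.map_congr_left fun e he => Set.indicator_of_mem (p.edges_subset_edgeSet he) _,
      hp.sum_endpointSum_edges hab fun v hv hva hvb => Set.indicator_of_notMem
        (fun hvX => hp.not_isLeaf hv hva hvb (hT.mem_iff_isLeaf.mp hvX)) g,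
      Set.indicator_of_mem ha, Set.indicator_of_mem hb]
  rw [tdist_eq_sum_edges hT.acyclic hp, tdist_eq_sum_edges hT.acyclic hp, Pi.add_def,
    List.sum_map_add, hpath, add_assoc]

lemma liso_add_endpointSum (hT : IsXTree X G) {L : Set (Sym2 U)} (hL : IsCordSet X L)
    {g : U → ℝ} (hg : ∀ a b, s(a, b) ∈ L → g a + g b = 0) (ω : Sym2 U → ℝ) :
    LIso L G ω G (ω + G.edgeSet.indicator (endpointSum (X.indicator g))) := by
  intro a b hab
  obtain ⟨hdiag, hX⟩ := hL _ hab
  rw [hT.tdist_add_endpointSum (hX a (Sym2.mem_mk_left a b)) (hX b (Sym2.mem_mk_right a b))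
    (fun h => hdiag (Sym2.mk_isDiag_iff.mpr h)), add_assoc, hg a b hab, add_zero]

end IsXTree

theorem EdgeWeightLasso.eq_zero_of_forall_add_eq_zero {X : Set U} {G : SimpleGraph U}
    {L : Set (Sym2 U)} (hX3 : 3 ≤ X.ncard) (hT : IsXTree X G) (hL : IsCordSet X L)
    (h : EdgeWeightLasso G L) {g : U → ℝ} (hg : ∀ a b, s(a, b) ∈ L → g a + g b = 0)
    {x : U} (hx : x ∈ X) : g x = 0 := by
  set σ := endpointSum (X.indicator g)
  set ω := G.edgeSet.indicator fun e => 1 + |σ e|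
  set η := G.edgeSet.indicator σ
  have hω : IsProperWeighting G ω := isProperWeighting_indicator fun _ _ => by positivity
  have hωη : IsProperWeighting G (ω + η) := by
    rw [← Set.indicator_add']
    exact isProperWeighting_indicator fun e _ => by
      have := neg_abs_le (σ e)
      simp only [Pi.add_apply]
      linarith
  have hη : η = 0 := by
    simpa using h ω (ω + η) hω hωη (hT.liso_add_endpointSum hL hg ω)
  obtain ⟨w, hxw⟩ := (hT.mem_iff_isLeaf.mp hx).exists_adj
  have hxw' : s(x, w) ∈ G.edgeSet := hxw
  simpa [η, σ, Set.indicator_of_mem hxw', hx, hT.notMem_of_adj hX3 hx hxw] using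
    congrFun hη s(x, w)

lemma ComponentBipartite.exists_signing {α : Type*} {Γ : SimpleGraph α} {x : α}
    (hΓ : ComponentBipartite Γ x) :
    ∃ g : α → ℝ, g x ≠ 0 ∧ ∀ u v, Γ.Adj u v → g u + g v = 0 := by
  obtain ⟨f, hf⟩ := hΓ
  refine ⟨fun u => if Γ.Reachable x u then (if f u then 1 else -1) else 0, ?_, ?_⟩
  · dsimp only
    split_ifs <;> simp_all
  · intro u v huv
    by_cases hu : Γ.Reachable x u
    · have hv : Γ.Reachable x v := hu.trans huv.reachable
      have := hf u v hu huv
      cases hfu : f u <;> cases hfv : f v <;> simp_all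
    · have hv : ¬ Γ.Reachable x v := fun hv => hu (hv.trans huv.symm.reachable)
      simp [hu, hv]

end Development

theorem edgeWeightLasso_stronglyNonBipartite_general {U : Type}
    (X : Set U) (G : SimpleGraph U)
    (hX3 : 3 ≤ X.ncard) (hT : IsXTree X G)
    (L : Set (Sym2 U)) (hL : IsCordSet X L)
    (h : EdgeWeightLasso G L) :
    StronglyNonBipartite (SimpleGraph.fromEdgeSet L) X := by
  intro x hx hbip
  obtain ⟨g, hgx, hg⟩ := hbip.exists_signing
  refine hgx (h.eq_zero_of_forall_add_eq_zero hX3 hT hL (fun a b hab => hg a b ?_) hx)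
  exact (fromEdgeSet_adj L).mpr ⟨hab, fun hba => (hL _ hab).1 (Sym2.mk_isDiag_iff.mpr hba)⟩

/-- Theorem 2 (ii): if `L` is an edge-weight lasso for the `X`-tree `T`,
then `L` is strongly non-bipartite: no connected component of the graph
`Γ(L) = (X, L)` is bipartite. -/
theorem edgeWeightLasso_stronglyNonBipartite {U : Type}
    (X : Set U) (G : SimpleGraph U)
    (hXfin : X.Finite) (hX3 : 3 ≤ X.ncard) (hT : IsXTree X G)
    (L : Set (Sym2 U)) (hL : IsCordSet X L)
    (h : EdgeWeightLasso G L) :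
    StronglyNonBipartite (SimpleGraph.fromEdgeSet L) X :=
  edgeWeightLasso_stronglyNonBipartite_general X G hX3 hT L hL h

end Lasso
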